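/- arXiv:2203.16351 — 2 statements merged into one kernel-verified Lean document; each statement's English description precedes it below -/
import Mathlib

section
/- Let (M, j, ⊗) be a monoidal category, C a category, and M[C] the free left M-actegory on C: the category M × C with action m' ⊙ (m,c) := (m' ⊗ m, c), unitor (λ_m⁻¹, 𝟙_c) and multiplicator (α⁻¹_{m'',m',m}, 𝟙_c). For any left M-actegory (D, ∘, η, μ): the functor which sends a strong M-linear functor (F, ℓ) : M[C] → (D,∘) to the functor c ↦ F(j, c), and sends an M-linear transformation to its restriction along c ↦ (j,c), is an equivalence of categories from the category of strong M-linear functors M[C] → (D,∘) and M-linear transformations to the functor category C ⥤ D. A quasi-inverse sends G : C ⥤ D to the functor (m,c) ↦ m ∘ G c, equipped with the lineator μ_{m',m,Gc} : m' ∘ (m ∘ G c) ⟶ (m' ⊗ m) ∘ G c. -/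
/-!
Every object `(m, c)` of the free actegory is `m ⊙ (j, c)` up to the right unitor, so a strong
linear functor `(F, ℓ)` is recovered from its restriction `G = F (j, -)` through
`ℓ_{m,(j,c)} ≫ F (ρ_m, 𝟙) : m ∘ G c ≅ F (m, c)`; naturality of `ℓ` and its compatibility with the
multiplicators make this a natural, `M`-linear isomorphism out of the lift of `G`. Conversely, restricting the
lift `(m, c) ↦ m ∘ G c` gives back `j ∘ G c ≅ G c` through the unitor of `D`.
-/

open CategoryTheory Category MonoidalCategory

universe v₁ v₂ v₃ u₁ u₂ u₃

variable (M : Type u₁) [Category.{v₁} M] [MonoidalCategory M]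
variable (C : Type u₂) [Category.{v₂} C]

/-- The data of a left actegory. -/
structure LeftActegoryData where
  actObj : M → C → C
  actHom : ∀ {m n : M} {c d : C}, (m ⟶ n) → (c ⟶ d) → (actObj m c ⟶ actObj n d)
  η : ∀ c : C, c ⟶ actObj (𝟙_ M) c
  η' : ∀ c : C, actObj (𝟙_ M) c ⟶ c
  μ : ∀ (m n : M) (c : C), actObj m (actObj n c) ⟶ actObj (m ⊗ n) c
  μ' : ∀ (m n : M) (c : C), actObj (m ⊗ n) c ⟶ actObj m (actObj n c)

variable {M C}

/-- The laws of a left actegory. -/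
structure IsLeftActegory (A : LeftActegoryData M C) : Prop where
  actHom_id : ∀ (m : M) (c : C), A.actHom (𝟙 m) (𝟙 c) = 𝟙 (A.actObj m c)
  actHom_comp : ∀ {m n p : M} {c d e : C} (g : m ⟶ n) (g' : n ⟶ p) (f : c ⟶ d) (f' : d ⟶ e),
      A.actHom (g ≫ g') (f ≫ f') = A.actHom g f ≫ A.actHom g' f'
  η_iso : ∀ c, A.η c ≫ A.η' c = 𝟙 c
  η'_iso : ∀ c, A.η' c ≫ A.η c = 𝟙 _
  μ_iso : ∀ m n c, A.μ m n c ≫ A.μ' m n c = 𝟙 _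
  μ'_iso : ∀ m n c, A.μ' m n c ≫ A.μ m n c = 𝟙 _
  η_nat : ∀ {c d : C} (f : c ⟶ d), f ≫ A.η d = A.η c ≫ A.actHom (𝟙 (𝟙_ M)) f
  μ_nat : ∀ {m m' n n' : M} {c c' : C} (g : m ⟶ m') (h : n ⟶ n') (f : c ⟶ c'),
      A.actHom g (A.actHom h f) ≫ A.μ m' n' c' = A.μ m n c ≫ A.actHom (g ⊗ₘ h) f
  pentagon : ∀ (m n p : M) (c : C),
      A.μ m n (A.actObj p c) ≫ A.μ (m ⊗ n) p c ≫ A.actHom (α_ m n p).hom (𝟙 c)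
        = A.actHom (𝟙 m) (A.μ n p c) ≫ A.μ m (n ⊗ p) c
  triangle_left : ∀ (m : M) (c : C),
      A.η (A.actObj m c) ≫ A.μ (𝟙_ M) m c = A.actHom (λ_ m).inv (𝟙 c)
  triangle_right : ∀ (m : M) (c : C),
      A.actHom (𝟙 m) (A.η c) ≫ A.μ m (𝟙_ M) c = A.actHom (ρ_ m).inv (𝟙 c)


variable (M) in
/-- The data of a lax linear functor: a functor together with a lineator. -/
structure LaxLinearData {D : Type u₃} [Category.{v₃} D]
    (A : LeftActegoryData M C) (B : LeftActegoryData M D) where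
  F : C ⥤ D
  lin : ∀ (m : M) (c : C), B.actObj m (F.obj c) ⟶ F.obj (A.actObj m c)

/-- The laws of a lax linear functor. -/
structure IsLaxLinear {D : Type u₃} [Category.{v₃} D]
    {A : LeftActegoryData M C} {B : LeftActegoryData M D}
    (L : LaxLinearData M A B) : Prop where
  lin_nat : ∀ {m n : M} {c d : C} (g : m ⟶ n) (f : c ⟶ d),
      B.actHom g (L.F.map f) ≫ L.lin n d = L.lin m c ≫ L.F.map (A.actHom g f)
  lin_unit : ∀ c : C, B.η (L.F.obj c) ≫ L.lin (𝟙_ M) c = L.F.map (A.η c)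
  lin_mult : ∀ (m n : M) (c : C),
      B.μ m n (L.F.obj c) ≫ L.lin (m ⊗ n) c
        = B.actHom (𝟙 m) (L.lin n c) ≫ L.lin m (A.actObj n c) ≫ L.F.map (A.μ m n c)

variable (M C) in
/-- The free left `M`-actegory on a category `C`: the category `M × C` with action
`m' ⊙ (m, c) := (m' ⊗ m, c)`, unitor `(λ⁻¹, 𝟙)` and multiplicator `(α⁻¹, 𝟙)`. -/
def freeActegory : LeftActegoryData M (M × C) where
  actObj m x := (m ⊗ x.1, x.2)
  actHom g f := (g ⊗ₘ f.1, f.2)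
  η x := ((λ_ x.1).inv, 𝟙 x.2)
  η' x := ((λ_ x.1).hom, 𝟙 x.2)
  μ m n x := ((α_ m n x.1).inv, 𝟙 x.2)
  μ' m n x := ((α_ m n x.1).hom, 𝟙 x.2)

variable {D : Type u₃} [Category.{v₃} D]

variable (M C) in
/-- An object of the category of strong `M`-linear functors from the free
`M`-actegory `M[C]` to a left `M`-actegory `(D, ∘)`. -/
structure FreeStrongLinear (B : LeftActegoryData M D) (hB : IsLeftActegory B) where
  L : LaxLinearData M (freeActegory M C) B
  laxLinear : IsLaxLinear L
  strong : ∀ (m : M) (x : M × C), IsIso (L.lin m x)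

variable {B : LeftActegoryData M D} {hB : IsLeftActegory B}

/-- An `M`-linear transformation between strong `M`-linear functors out of the
free actegory. -/
@[ext]
structure LinearHom (K K' : FreeStrongLinear M C B hB) where
  t : K.L.F ⟶ K'.L.F
  linearity : ∀ (m : M) (x : M × C),
      B.actHom (𝟙 m) (t.app x) ≫ K'.L.lin m x
        = K.L.lin m x ≫ t.app ((freeActegory M C).actObj m x)

/-- The category of strong `M`-linear functors `M[C] → (D, ∘)` and `M`-linear
transformations. -/
instance : Category (FreeStrongLinear M C B hB) where
  Hom := LinearHom
  id K :=
    { t := 𝟙 K.L.F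
      linearity := fun m x => by
        simp [hB.actHom_id] }
  comp {K₁ K₂ K₃} f g :=
    { t := f.t ≫ g.t
      linearity := fun m x => by
        have h : B.actHom (𝟙 m) (f.t.app x ≫ g.t.app x)
            = B.actHom (𝟙 m) (f.t.app x) ≫ B.actHom (𝟙 m) (g.t.app x) := by
          rw [← hB.actHom_comp]; simp
        simp only [NatTrans.comp_app, h, Category.assoc, g.linearity]
        rw [← Category.assoc, f.linearity, Category.assoc] }
  id_comp f := by
    apply LinearHom.ext
    show 𝟙 _ ≫ f.t = f.t
    simp
  comp_id f := by
    apply LinearHom.ext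
    show f.t ≫ 𝟙 _ = f.t
    simp
  assoc f g h := by
    apply LinearHom.ext
    show (f.t ≫ g.t) ≫ h.t = f.t ≫ g.t ≫ h.t
    simp

variable (M C) in
/-- The restriction functor sending a strong linear functor `(F, ℓ) : M[C] → (D, ∘)`
to the functor `c ↦ F (j, c)` and a linear transformation to its restriction. -/
def restrictFree (B : LeftActegoryData M D) (hB : IsLeftActegory B) :
    FreeStrongLinear M C B hB ⥤ (C ⥤ D) where
  obj K :=
    { obj := fun c => K.L.F.obj (𝟙_ M, c)
      map := fun f => K.L.F.map (𝟙 (𝟙_ M), f)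
      map_id := fun c => K.L.F.map_id (𝟙_ M, c)
      map_comp := fun f g => by
        rw [← K.L.F.map_comp]
        congr 1
        ext <;> simp }
  map ξ :=
    { app := fun c => ξ.t.app (𝟙_ M, c)
      naturality := fun c d f => by
        exact ξ.t.naturality ((𝟙 (𝟙_ M), f) : ((𝟙_ M, c) : M × C) ⟶ (𝟙_ M, d)) }
  map_id K := by
    apply NatTrans.ext
    funext c
    rfl
  map_comp f g := by
    apply NatTrans.ext
    funext c
    rfl

variable (M C) in
/-- The lift of a functor `G : C ⥤ D` to the strong linear functor
`(m, c) ↦ m ∘ G c` out of the free actegory, with lineator the multiplicator. -/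
def liftFree (B : LeftActegoryData M D) (hB : IsLeftActegory B) (G : C ⥤ D) :
    FreeStrongLinear M C B hB where
  L :=
    { F :=
        { obj := fun x => B.actObj x.1 (G.obj x.2)
          map := fun f => B.actHom f.1 (G.map f.2)
          map_id := fun x => by simp [hB.actHom_id]
          map_comp := fun f g => by
            dsimp
            rw [G.map_comp, hB.actHom_comp] }
      lin := fun m x => B.μ m x.1 (G.obj x.2) }
  laxLinear :=
    { lin_nat := fun g f => by
        dsimp
        exact hB.μ_nat g f.1 (G.map f.2)
      lin_unit := fun x => by
        dsimp [freeActegory]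
        rw [G.map_id]
        exact hB.triangle_left x.1 (G.obj x.2)
      lin_mult := fun m n x => by
        dsimp [freeActegory]
        rw [G.map_id]
        have hinv : B.actHom (α_ m n x.1).hom (𝟙 (G.obj x.2))
            ≫ B.actHom (α_ m n x.1).inv (𝟙 (G.obj x.2)) = 𝟙 _ := by
          rw [← hB.actHom_comp]; simp [hB.actHom_id]
        have hp := hB.pentagon m n x.1 (G.obj x.2)
        calc B.μ m n (B.actObj x.1 (G.obj x.2)) ≫ B.μ (m ⊗ n) x.1 (G.obj x.2)
            = (B.μ m n (B.actObj x.1 (G.obj x.2)) ≫ B.μ (m ⊗ n) x.1 (G.obj x.2)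
                ≫ B.actHom (α_ m n x.1).hom (𝟙 (G.obj x.2)))
                ≫ B.actHom (α_ m n x.1).inv (𝟙 (G.obj x.2)) := by
              simp only [Category.assoc, hinv, Category.comp_id]
          _ = (B.actHom (𝟙 m) (B.μ n x.1 (G.obj x.2)) ≫ B.μ m (n ⊗ x.1) (G.obj x.2))
                ≫ B.actHom (α_ m n x.1).inv (𝟙 (G.obj x.2)) := by rw [hp]
          _ = B.actHom (𝟙 m) (B.μ n x.1 (G.obj x.2)) ≫ B.μ m (n ⊗ x.1) (G.obj x.2)
                ≫ B.actHom (α_ m n x.1).inv (𝟙 (G.obj x.2)) := by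
              simp only [Category.assoc] }
  strong := fun m x =>
    ⟨B.μ' m x.1 (G.obj x.2), hB.μ_iso _ _ _, hB.μ'_iso _ _ _⟩


open CategoryTheory.Prod

namespace IsLeftActegory

lemma actHom_id_comp (hB : IsLeftActegory B) (m : M) {c d e : D} (f : c ⟶ d) (g : d ⟶ e) :
    B.actHom (𝟙 m) (f ≫ g) = B.actHom (𝟙 m) f ≫ B.actHom (𝟙 m) g := by
  rw [← hB.actHom_comp, Category.comp_id]

def actIso (hB : IsLeftActegory B) (m : M) {c d : D} (e : c ≅ d) : B.actObj m c ≅ B.actObj m d where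
  hom := B.actHom (𝟙 m) e.hom
  inv := B.actHom (𝟙 m) e.inv
  hom_inv_id := by rw [← hB.actHom_id_comp, e.hom_inv_id, hB.actHom_id]
  inv_hom_id := by rw [← hB.actHom_id_comp, e.inv_hom_id, hB.actHom_id]

def unitor (hB : IsLeftActegory B) (c : D) : c ≅ B.actObj (𝟙_ M) c :=
  ⟨B.η c, B.η' c, hB.η_iso c, hB.η'_iso c⟩

lemma η'_nat (hB : IsLeftActegory B) {c d : D} (f : c ⟶ d) :
    B.actHom (𝟙 (𝟙_ M)) f ≫ B.η' d = B.η' c ≫ f := by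
  change _ ≫ (hB.unitor d).inv = (hB.unitor c).inv ≫ f
  rw [Iso.comp_inv_eq, Category.assoc, Iso.eq_inv_comp]
  exact (hB.η_nat f).symm

end IsLeftActegory

def freeActegory.actUnitIso (a : M) (c : C) : (freeActegory M C).actObj a (𝟙_ M, c) ≅ (a, c) :=
  Iso.prod (ρ_ a) (Iso.refl c)

lemma freeActegory.actUnitIso_hom_naturality {a b : M} {c d : C} (f : a ⟶ b) (g : c ⟶ d) :
    (freeActegory M C).actHom f (𝟙 (𝟙_ M) ×ₘ g) ≫ (actUnitIso b d).hom
      = (actUnitIso a c).hom ≫ (f ×ₘ g) := by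
  refine Prod.ext ?_ ?_
  · simp [freeActegory, actUnitIso, tensorHom_id]
  · simp [freeActegory, actUnitIso]

lemma freeActegory.actHom_actUnitIso_hom (m a : M) (c : C) :
    (freeActegory M C).actHom (𝟙 m) (actUnitIso a c).hom
      = (freeActegory M C).μ m a (𝟙_ M, c) ≫ (actUnitIso (m ⊗ a) c).hom := by
  refine Prod.ext ?_ ?_
  · simp [freeActegory, actUnitIso]
  · simp [freeActegory, actUnitIso]

namespace FreeStrongLinear

open freeActegory

noncomputable def linIso (K : FreeStrongLinear M C B hB) (m : M) (x : M × C) :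
    B.actObj m (K.L.F.obj x) ≅ K.L.F.obj ((freeActegory M C).actObj m x) :=
  haveI := K.strong m x
  asIso (K.L.lin m x)

def isoMk {K K' : FreeStrongLinear M C B hB} (e : K.L.F ≅ K'.L.F)
    (he : ∀ (m : M) (x : M × C), B.actHom (𝟙 m) (e.hom.app x) ≫ K'.L.lin m x
      = K.L.lin m x ≫ e.hom.app ((freeActegory M C).actObj m x)) : K ≅ K' where
  hom := ⟨e.hom, he⟩
  inv := ⟨e.inv, fun m x => by
    change (hB.actIso m (e.app x)).inv ≫ _ = _ ≫ (e.app _).inv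
    rw [Iso.inv_comp_eq, ← Category.assoc, Iso.eq_comp_inv]
    exact (he m x).symm⟩
  hom_inv_id := LinearHom.ext e.hom_inv_id
  inv_hom_id := LinearHom.ext e.inv_hom_id

lemma lin_actUnitIso_naturality (K : FreeStrongLinear M C B hB) {a b : M} {c d : C}
    (f : a ⟶ b) (g : c ⟶ d) :
    B.actHom f (K.L.F.map (𝟙 (𝟙_ M) ×ₘ g)) ≫ K.L.lin b (𝟙_ M, d) ≫ K.L.F.map (actUnitIso b d).hom
      = (K.L.lin a (𝟙_ M, c) ≫ K.L.F.map (actUnitIso a c).hom) ≫ K.L.F.map (f ×ₘ g) := by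
  rw [← Category.assoc, K.laxLinear.lin_nat, Category.assoc, Category.assoc,
    ← K.L.F.map_comp, ← K.L.F.map_comp, actUnitIso_hom_naturality]

lemma lin_actUnitIso_linearity (K : FreeStrongLinear M C B hB) (m a : M) (c : C) :
    B.actHom (𝟙 m) (K.L.lin a (𝟙_ M, c) ≫ K.L.F.map (actUnitIso a c).hom) ≫ K.L.lin m (a, c) =
      B.μ m a (K.L.F.obj (𝟙_ M, c)) ≫ K.L.lin (m ⊗ a) (𝟙_ M, c)
        ≫ K.L.F.map (actUnitIso (m ⊗ a) c).hom := by
  rw [hB.actHom_id_comp, Category.assoc, K.laxLinear.lin_nat, ← Category.assoc (B.μ _ _ _),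
    K.laxLinear.lin_mult]
  simp only [Category.assoc, ← K.L.F.map_comp]
  congr 3
  exact actHom_actUnitIso_hom m a c

end FreeStrongLinear

open FreeStrongLinear freeActegory in
noncomputable def liftRestrictIso (K : FreeStrongLinear M C B hB) :
    liftFree M C B hB ((restrictFree M C B hB).obj K) ≅ K :=
  isoMk
    (NatIso.ofComponents
      (fun x => K.linIso x.1 (𝟙_ M, x.2) ≪≫ K.L.F.mapIso (actUnitIso x.1 x.2))
      (fun f => K.lin_actUnitIso_naturality f.1 f.2))
    (fun m x => K.lin_actUnitIso_linearity m x.1 x.2)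

open freeActegory in
lemma LinearHom.lin_actUnitIso_naturality {K K' : FreeStrongLinear M C B hB} (ξ : K ⟶ K')
    (a : M) (c : C) :
    B.actHom (𝟙 a) (ξ.t.app (𝟙_ M, c)) ≫ K'.L.lin a (𝟙_ M, c) ≫ K'.L.F.map (actUnitIso a c).hom
      = (K.L.lin a (𝟙_ M, c) ≫ K.L.F.map (actUnitIso a c).hom) ≫ ξ.t.app (a, c) := by
  rw [← Category.assoc, ξ.linearity, Category.assoc, Category.assoc, ξ.t.naturality]

variable (M C) in
def liftFreeFunctor (B : LeftActegoryData M D) (hB : IsLeftActegory B) :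
    (C ⥤ D) ⥤ FreeStrongLinear M C B hB where
  obj := liftFree M C B hB
  map ξ :=
    { t :=
        { app := fun x => B.actHom (𝟙 x.1) (ξ.app x.2)
          naturality := fun x y f => by
            dsimp [liftFree]
            rw [← hB.actHom_comp, ← hB.actHom_comp, ξ.naturality, Category.id_comp,
              Category.comp_id] }
      linearity := fun m x => by
        dsimp [liftFree, freeActegory]
        rw [hB.μ_nat, id_tensorHom_id] }
  map_id G := LinearHom.ext <| NatTrans.ext <| funext fun x => hB.actHom_id x.1 (G.obj x.2)
  map_comp ξ ζ := LinearHom.ext <| NatTrans.ext <| funext fun x =>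
    hB.actHom_id_comp x.1 (ξ.app x.2) (ζ.app x.2)

variable (M C) in
noncomputable def liftRestrictNatIso (B : LeftActegoryData M D) (hB : IsLeftActegory B) :
    restrictFree M C B hB ⋙ liftFreeFunctor M C B hB ≅ 𝟭 _ :=
  NatIso.ofComponents liftRestrictIso fun ξ => LinearHom.ext <| NatTrans.ext <| funext
    fun x => ξ.lin_actUnitIso_naturality x.1 x.2

def restrictLiftIso (G : C ⥤ D) : (restrictFree M C B hB).obj (liftFree M C B hB G) ≅ G :=
  NatIso.ofComponents (fun c => (hB.unitor (G.obj c)).symm) fun f => hB.η'_nat (G.map f)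

variable (M C) in
def restrictLiftNatIso (B : LeftActegoryData M D) (hB : IsLeftActegory B) :
    liftFreeFunctor M C B hB ⋙ restrictFree M C B hB ≅ 𝟭 _ :=
  NatIso.ofComponents restrictLiftIso fun ξ => NatTrans.ext <| funext fun c => hB.η'_nat (ξ.app c)

/-- For any left `M`-actegory `(D, ∘, η, μ)`, the restriction functor
sending a strong `M`-linear functor `(F, ℓ) : M[C] → (D, ∘)` to `c ↦ F (j, c)` (and a
linear transformation to its restriction) is an equivalence from the category of
strong `M`-linear functors out of the free actegory `M[C]` (with `M`-linear
transformations) to the functor category `C ⥤ D`; a quasi-inverse sends `G : C ⥤ D`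
to `(m, c) ↦ m ∘ G c` with lineator the multiplicator `μ`. -/
theorem restrictFree_isEquivalence
    (B : LeftActegoryData M D) (hB : IsLeftActegory B) :
    (restrictFree M C B hB).IsEquivalence ∧
    ∃ E : FreeStrongLinear M C B hB ≌ (C ⥤ D),
      E.functor = restrictFree M C B hB ∧
      ∀ G : C ⥤ D, E.inverse.obj G = liftFree M C B hB G := by
  let E : FreeStrongLinear M C B hB ≌ (C ⥤ D) :=
    CategoryTheory.Equivalence.mk (restrictFree M C B hB) (liftFreeFunctor M C B hB)
      (liftRestrictNatIso M C B hB).symm (restrictLiftNatIso M C B hB)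
  exact ⟨E.isEquivalence_functor, E, rfl, fun _ => rfl⟩
end

section
/- Let (M, j, ⊗, β) be a braided monoidal category and (C, •, η, μ) a left M-actegory. Define a right action by c ∘ m := m • c (on morphisms (f : c ⟶ d, g : m ⟶ n) ↦ g • f), with right unitor η^rev_c := η_c : c ≅ c ∘ j and right multiplicator μ^rev_{c,n,m} := μ_{m,n,c} ≫ (β_{m,n} • 𝟙_c) : (c ∘ n) ∘ m ⟶ c ∘ (n ⊗ m). Then (C, ∘, η^rev, μ^rev) is a right M-actegory, and together with • and the bimodulator ζ_{m,c,n} := μ_{m,n,c} ≫ (β_{m,n} • 𝟙_c) ≫ μ⁻¹_{n,m,c} : m • (c ∘ n) ⟶ (m • c) ∘ n, the triple (C, •, ∘, ζ) is an (M,M)-biactegory (called the mirroring of (C,•)). -/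
open CategoryTheory Category MonoidalCategory

universe v₁ v₂ v₃ u₁ u₂ u₃

variable (M : Type u₁) [Category.{v₁} M] [MonoidalCategory M]
variable (C : Type u₂) [Category.{v₂} C]

variable {M C}

variable (N : Type u₁) [Category.{v₁} N] [MonoidalCategory N]

variable (C) in
/-- The data of a right actegory: an action `∘ : C × N ⥤ C` together with a
unitor `c ≅ c ∘ i`, a multiplicator `(c ∘ n) ∘ m ≅ c ∘ (n ⊗ m)` and their
(candidate) inverses. -/
structure RightActegoryData where
  actObj : C → N → C
  actHom : ∀ {c d : C} {n n' : N}, (c ⟶ d) → (n ⟶ n') → (actObj c n ⟶ actObj d n')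
  η : ∀ c : C, c ⟶ actObj c (𝟙_ N)
  η' : ∀ c : C, actObj c (𝟙_ N) ⟶ c
  μ : ∀ (c : C) (n m : N), actObj (actObj c n) m ⟶ actObj c (n ⊗ m)
  μ' : ∀ (c : C) (n m : N), actObj c (n ⊗ m) ⟶ actObj (actObj c n) m

variable {N}

/-- The laws of a right actegory (i.e. the coherences making it a left actegory
over the monoidal opposite). -/
structure IsRightActegory (R : RightActegoryData C N) : Prop where
  actHom_id : ∀ (c : C) (n : N), R.actHom (𝟙 c) (𝟙 n) = 𝟙 (R.actObj c n)
  actHom_comp : ∀ {c d e : C} {n p q : N} (f : c ⟶ d) (f' : d ⟶ e) (h : n ⟶ p) (h' : p ⟶ q),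
      R.actHom (f ≫ f') (h ≫ h') = R.actHom f h ≫ R.actHom f' h'
  η_iso : ∀ c, R.η c ≫ R.η' c = 𝟙 c
  η'_iso : ∀ c, R.η' c ≫ R.η c = 𝟙 _
  μ_iso : ∀ c n m, R.μ c n m ≫ R.μ' c n m = 𝟙 _
  μ'_iso : ∀ c n m, R.μ' c n m ≫ R.μ c n m = 𝟙 _
  η_nat : ∀ {c d : C} (f : c ⟶ d), f ≫ R.η d = R.η c ≫ R.actHom f (𝟙 (𝟙_ N))
  μ_nat : ∀ {c c' : C} {n n' m m' : N} (f : c ⟶ c') (h : n ⟶ n') (k : m ⟶ m'),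
      R.actHom (R.actHom f h) k ≫ R.μ c' n' m' = R.μ c n m ≫ R.actHom f (h ⊗ₘ k)
  pentagon : ∀ (c : C) (p n m : N),
      R.μ (R.actObj c p) n m ≫ R.μ c p (n ⊗ m) ≫ R.actHom (𝟙 c) (α_ p n m).inv
        = R.actHom (R.μ c p n) (𝟙 m) ≫ R.μ c (p ⊗ n) m
  triangle_left : ∀ (c : C) (m : N),
      R.η (R.actObj c m) ≫ R.μ c m (𝟙_ N) = R.actHom (𝟙 c) (ρ_ m).inv
  triangle_right : ∀ (c : C) (m : N),
      R.actHom (R.η c) (𝟙 m) ≫ R.μ c (𝟙_ N) m = R.actHom (𝟙 c) (λ_ m).inv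

/-- The data of a bimodulator relating a left `M`-action and a right `N`-action on
the same category: a natural isomorphism `ζ : m • (c ∘ n) ≅ (m • c) ∘ n`. -/
structure BimodulatorData (A : LeftActegoryData M C) (R : RightActegoryData C N) where
  ζ : ∀ (m : M) (c : C) (n : N), A.actObj m (R.actObj c n) ⟶ R.actObj (A.actObj m c) n
  ζ' : ∀ (m : M) (c : C) (n : N), R.actObj (A.actObj m c) n ⟶ A.actObj m (R.actObj c n)

/-- The laws of a biactegory: the bimodulator is a natural isomorphism satisfying
the two pentagon and the two triangle coherence laws relating it to the
structure of the two actions. -/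
structure IsBiactegory {A : LeftActegoryData M C} {R : RightActegoryData C N}
    (Z : BimodulatorData A R) : Prop where
  ζ_iso : ∀ m c n, Z.ζ m c n ≫ Z.ζ' m c n = 𝟙 _
  ζ'_iso : ∀ m c n, Z.ζ' m c n ≫ Z.ζ m c n = 𝟙 _
  ζ_nat : ∀ {m m' : M} {c c' : C} {n n' : N} (g : m ⟶ m') (f : c ⟶ c') (h : n ⟶ n'),
      A.actHom g (R.actHom f h) ≫ Z.ζ m' c' n' = Z.ζ m c n ≫ R.actHom (A.actHom g f) h
  pentagon_left : ∀ (m n : M) (c : C) (p : N),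
      A.μ m n (R.actObj c p) ≫ Z.ζ (m ⊗ n) c p
        = A.actHom (𝟙 m) (Z.ζ n c p) ≫ Z.ζ m (A.actObj n c) p ≫ R.actHom (A.μ m n c) (𝟙 p)
  pentagon_right : ∀ (p : M) (c : C) (m n : N),
      A.actHom (𝟙 p) (R.μ c m n) ≫ Z.ζ p c (m ⊗ n)
        = Z.ζ p (R.actObj c m) n ≫ R.actHom (Z.ζ p c m) (𝟙 n) ≫ R.μ (A.actObj p c) m n
  triangle_unit_left : ∀ (c : C) (m : N),
      A.η (R.actObj c m) ≫ Z.ζ (𝟙_ M) c m = R.actHom (A.η c) (𝟙 m)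
  triangle_unit_right : ∀ (m : M) (c : C),
      A.actHom (𝟙 m) (R.η c) ≫ Z.ζ m c (𝟙_ N) = R.η (A.actObj m c)

/-- The right `M`-action obtained by mirroring a left `M`-action along the braiding:
`c ∘ m := m • c`, with right unitor `η` and right multiplicator
`μ_{m,n,c} ≫ (β_{m,n} • 𝟙_c)`. -/
def mirrorRight [BraidedCategory M] (A : LeftActegoryData M C) :
    RightActegoryData C M where
  actObj c m := A.actObj m c
  actHom f g := A.actHom g f
  η c := A.η c
  η' c := A.η' c
  μ c n m := A.μ m n c ≫ A.actHom (β_ m n).hom (𝟙 c)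
  μ' c n m := A.actHom (β_ m n).inv (𝟙 c) ≫ A.μ' m n c

/-- The bimodulator of the mirroring: `ζ = μ ≫ (β • 𝟙) ≫ μ⁻¹`. -/
def mirrorBimodulator [BraidedCategory M] (A : LeftActegoryData M C) :
    BimodulatorData A (mirrorRight A) where
  ζ m c n := A.μ m n c ≫ A.actHom (β_ m n).hom (𝟙 c) ≫ A.μ' n m c
  ζ' m c n := A.μ n m c ≫ A.actHom (β_ m n).inv (𝟙 c) ≫ A.μ' m n c

/-! An `IsLeftActegory` is the same thing as Mathlib's `MonoidalLeftAction`, with `μ` the inverse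
of the action associator `αₗ`. For an action, every structure map of the mirroring is built from
`αₗ` and morphisms `φ ⊵ₗ c`; pushing the `αₗ` outwards reduces each coherence law to an equality
`φ ⊵ₗ c = ψ ⊵ₗ c` coming from `M`: naturality of the braiding for the naturality laws, a hexagon
identity for the left pentagon of the bimodulator, the Yang–Baxter equation for the pentagon of the
right action and the right pentagon of the bimodulator, and the compatibility of the braiding with
the unit for the triangles. -/

namespace CategoryTheory.MonoidalCategory.MonoidalLeftAction

variable [MonoidalLeftAction M C]

lemma actionHomRight_actionHomLeft (m : M) {n n' : M} (f : n ⟶ n') (c : C) :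
    m ⊴ₗ f ⊵ₗ c = (αₗ m n c).inv ≫ (m ◁ f) ⊵ₗ c ≫ (αₗ m n' c).hom := by
  simp

lemma actionHomRight_actionAssocIso_hom (m n p : M) (c : C) :
    m ⊴ₗ (αₗ n p c).hom =
      (αₗ m (n ⊗ p) c).inv ≫ (α_ m n p).inv ⊵ₗ c ≫ (αₗ (m ⊗ n) p c).hom ≫
        (αₗ m n (p ⊙ₗ c)).hom := by
  rw [← associator_actionHom, inv_hom_actionHomLeft_assoc, Iso.inv_hom_id_assoc]

lemma actionHomRight_actionAssocIso_inv (m n p : M) (c : C) :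
    m ⊴ₗ (αₗ n p c).inv =
      (αₗ m n (p ⊙ₗ c)).inv ≫ (αₗ (m ⊗ n) p c).inv ≫ (α_ m n p).hom ⊵ₗ c ≫
        (αₗ m (n ⊗ p) c).hom := by
  rw [← cancel_epi (m ⊴ₗ (αₗ n p c).hom), actionHomRight_hom_inv,
    actionHomRight_actionAssocIso_hom]
  simp

lemma leftUnitor_inv_actionHom (m : M) (c : C) :
    (λ_ m).inv ⊵ₗ c = (λₗ (m ⊙ₗ c)).inv ≫ (αₗ (𝟙_ M) m c).inv := by
  rw [← cancel_mono ((λ_ m).hom ⊵ₗ c), inv_hom_actionHomLeft, leftUnitor_actionHom]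
  simp

lemma rightUnitor_inv_actionHom (m : M) (c : C) :
    (ρ_ m).inv ⊵ₗ c = m ⊴ₗ (λₗ c).inv ≫ (αₗ m (𝟙_ M) c).inv := by
  rw [← cancel_mono ((ρ_ m).hom ⊵ₗ c), inv_hom_actionHomLeft, rightUnitor_actionHom]
  simp

lemma braiding_actionHomLeft_naturality [BraidedCategory M] {m m' n n' : M} {c c' : C}
    (g : m ⟶ m') (h : n ⟶ n') (f : c ⟶ c') :
    ((g ⊗ₘ h) ⊙ₗₘ f) ≫ (β_ m' n').hom ⊵ₗ c' = (β_ m n).hom ⊵ₗ c ≫ ((h ⊗ₘ g) ⊙ₗₘ f) := by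
  simp only [← actionHom_id, ← actionHom_comp, BraidedCategory.braiding_naturality, comp_id,
    id_comp]

end CategoryTheory.MonoidalCategory.MonoidalLeftAction

namespace IsLeftActegory

variable {A : LeftActegoryData M C} (hA : IsLeftActegory A)
include hA

def μIso (m n : M) (c : C) : A.actObj (m ⊗ n) c ≅ A.actObj m (A.actObj n c) :=
  ⟨A.μ' m n c, A.μ m n c, hA.μ'_iso m n c, hA.μ_iso m n c⟩

def ηIso (c : C) : A.actObj (𝟙_ M) c ≅ c :=
  ⟨A.η' c, A.η c, hA.η'_iso c, hA.η_iso c⟩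

def actIsoLeft {m n : M} (e : m ≅ n) (c : C) : A.actObj m c ≅ A.actObj n c where
  hom := A.actHom e.hom (𝟙 c)
  inv := A.actHom e.inv (𝟙 c)
  hom_inv_id := by rw [← hA.actHom_comp, e.hom_inv_id, id_comp, hA.actHom_id]
  inv_hom_id := by rw [← hA.actHom_comp, e.inv_hom_id, id_comp, hA.actHom_id]

def actIsoRight (m : M) {c d : C} (e : c ≅ d) : A.actObj m c ≅ A.actObj m d where
  hom := A.actHom (𝟙 m) e.hom
  inv := A.actHom (𝟙 m) e.inv
  hom_inv_id := by rw [← hA.actHom_comp, e.hom_inv_id, id_comp, hA.actHom_id]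
  inv_hom_id := by rw [← hA.actHom_comp, e.inv_hom_id, id_comp, hA.actHom_id]

abbrev toMonoidalLeftAction : MonoidalLeftAction M C where
  actionObj := A.actObj
  actionHomLeft g c := A.actHom g (𝟙 c)
  actionHomRight m _ _ f := A.actHom (𝟙 m) f
  actionHom := A.actHom
  actionAssocIso := hA.μIso
  actionUnitIso := hA.ηIso
  actionHom_def g f := by simp only [← hA.actHom_comp, id_comp, comp_id]
  actionHomRight_id := hA.actHom_id
  id_actionHomLeft := hA.actHom_id
  actionHom_comp := hA.actHom_comp
  actionAssocIso_hom_naturality g h f := by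
    rw [← Iso.inv_comp_eq, ← assoc, ← Iso.eq_comp_inv]
    exact (hA.μ_nat g h f).symm
  actionUnitIso_hom_naturality f := by
    rw [← Iso.comp_inv_eq, assoc, ← Iso.eq_inv_comp]
    exact hA.η_nat f
  whiskerLeft_actionHomLeft m _ _ g c := by
    rw [← Iso.inv_comp_eq]
    simpa [μIso] using (hA.μ_nat (𝟙 m) g (𝟙 c)).symm
  whiskerRight_actionHomLeft n g c := by
    rw [← Iso.inv_comp_eq]
    simpa [μIso, hA.actHom_id] using (hA.μ_nat g (𝟙 n) (𝟙 c)).symm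
  associator_actionHom m n p c := by
    refine (Iso.inv_eq_inv (hA.actIsoLeft (α_ m n p) c ≪≫ hA.μIso m (n ⊗ p) c ≪≫
      hA.actIsoRight m (hA.μIso n p c)) (hA.μIso (m ⊗ n) p c ≪≫ hA.μIso m n _)).1 ?_
    simp only [Iso.trans_inv, μIso, actIsoLeft, actIsoRight]
    rw [← hA.pentagon, assoc, assoc, ← hA.actHom_comp, Iso.hom_inv_id, id_comp, hA.actHom_id,
      comp_id]
  leftUnitor_actionHom m c :=
    (Iso.inv_eq_inv (hA.actIsoLeft (λ_ m) c) (hA.μIso _ m c ≪≫ hA.ηIso _)).1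
      (hA.triangle_left m c).symm
  rightUnitor_actionHom m c :=
    (Iso.inv_eq_inv (hA.actIsoLeft (ρ_ m) c) (hA.μIso m _ c ≪≫ hA.actIsoRight m (hA.ηIso c))).1
      (hA.triangle_right m c).symm

end IsLeftActegory

open scoped MonoidalLeftAction in
variable (M C) in
abbrev LeftActegoryData.ofMonoidalLeftAction [MonoidalLeftAction M C] : LeftActegoryData M C where
  actObj m c := m ⊙ₗ c
  actHom g f := g ⊙ₗₘ f
  η c := (λₗ c).inv
  η' c := (λₗ c).hom
  μ m n c := (αₗ m n c).inv
  μ' m n c := (αₗ m n c).hom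

section Mirror

open MonoidalLeftAction BraidedCategory

variable (M C) [BraidedCategory M] [MonoidalLeftAction M C]

theorem isRightActegory_mirrorRight_ofMonoidalLeftAction :
    IsRightActegory (mirrorRight (LeftActegoryData.ofMonoidalLeftAction M C)) where
  actHom_id _ _ := by simp [mirrorRight]
  actHom_comp _ _ _ _ := by simp [mirrorRight]
  η_iso _ := by simp [mirrorRight]
  η'_iso _ := by simp [mirrorRight]
  μ_iso _ _ _ := by simp [mirrorRight]
  μ'_iso _ _ _ := by simp [mirrorRight]
  η_nat _ := by simp [mirrorRight]
  μ_nat f h k := by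
    dsimp only [mirrorRight, LeftActegoryData.ofMonoidalLeftAction]
    simp only [actionHom_id, assoc]
    rw [actionAssocIso_inv_naturality_assoc, braiding_actionHomLeft_naturality]
  pentagon c p n m := by
    simp only [mirrorRight, actionHom_id, actionHomLeft_action, braiding_tensor_left_hom,
      comp_actionHomLeft, assoc, hom_inv_actionHomLeft, comp_id, Iso.hom_inv_id_assoc,
      id_actionHom, actionHomRight_comp, actionHomRight_actionAssocIso_inv,
      actionHomRight_actionHomLeft, braiding_tensor_right_hom, Iso.cancel_iso_inv_left]
    simp only [← comp_actionHomLeft]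
    congr 1
    simp [← yang_baxter_assoc]
  triangle_left _ _ := by simp [mirrorRight]
  triangle_right _ _ := by simp [mirrorRight]

theorem isBiactegory_mirrorBimodulator_ofMonoidalLeftAction :
    IsBiactegory (mirrorBimodulator (LeftActegoryData.ofMonoidalLeftAction M C)) where
  ζ_iso _ _ _ := by simp [mirrorRight, mirrorBimodulator]
  ζ'_iso _ _ _ := by simp [mirrorRight, mirrorBimodulator]
  ζ_nat g f h := by
    dsimp only [mirrorRight, mirrorBimodulator, LeftActegoryData.ofMonoidalLeftAction]
    simp only [actionHom_id, assoc]
    rw [actionAssocIso_inv_naturality_assoc, ← actionAssocIso_hom_naturality,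
      reassoc_of% braiding_actionHomLeft_naturality]
  pentagon_left m n c p := by
    simp [mirrorRight, mirrorBimodulator, actionHomRight_actionHomLeft,
      actionHomRight_actionAssocIso_hom, actionHomRight_actionAssocIso_inv,
      -whiskerLeft_actionHomLeft]
  pentagon_right p c m n := by
    simp only [mirrorRight, mirrorBimodulator, actionHom_id, id_actionHom, actionHomRight_comp,
      actionHomRight_actionAssocIso_inv, actionHomRight_actionHomLeft, assoc,
      Iso.hom_inv_id_assoc, braiding_tensor_right_hom, comp_actionHomLeft, actionHomLeft_action,
      actionHomRight_actionAssocIso_hom, Iso.cancel_iso_inv_left]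
    simp only [← comp_actionHomLeft_assoc]
    congr 2
    simp [← yang_baxter_assoc]
  triangle_unit_left _ _ := by simp [mirrorRight, mirrorBimodulator, rightUnitor_inv_actionHom]
  triangle_unit_right _ _ := by simp [mirrorRight, mirrorBimodulator, leftUnitor_inv_actionHom]

end Mirror

/-- **mirroring.** Let `M` be braided and `(C, •)` a left `M`-actegory.
Then `c ∘ m := m • c` (with `g • f` acting on morphism pairs), with right unitor `η`
and right multiplicator `μ_{m,n,c} ≫ (β_{m,n} • 𝟙_c)`, is a right `M`-actegory, and
together with `•` and the bimodulator
`ζ_{m,c,n} = μ_{m,n,c} ≫ (β_{m,n} • 𝟙_c) ≫ μ⁻¹_{n,m,c}` the triple `(C, •, ∘, ζ)`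
is an `(M,M)`-biactegory. -/
theorem mirroring_is_biactegory [BraidedCategory M]
    (A : LeftActegoryData M C) (hA : IsLeftActegory A) :
    IsRightActegory (mirrorRight A) ∧ IsBiactegory (mirrorBimodulator A) :=
  let _ := hA.toMonoidalLeftAction
  -- by η for structures, `A` is `LeftActegoryData.ofMonoidalLeftAction M C` for this action
  ⟨isRightActegory_mirrorRight_ofMonoidalLeftAction M C,
    isBiactegory_mirrorBimodulator_ofMonoidalLeftAction M C⟩
end
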